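/- arXiv:2206.06099 — 3 statements merged into one kernel-verified Lean document; each statement's English description precedes it below -/
import Mathlib

section
/- For every total order T' on the circle S¹ (the unit circle in ℝ² with its Euclidean metric), the snake number satisfies Snake(S¹,T') ≥ 2; in fact there exists a pair of antipodal points x, A(x) with Snake_{T'}(x, A(x)) ≥ 2. -/
open Metric Set

/-- The pair `(U₁, U₂)` contains a snake of length `s` with respect to the
strict total order `T`: a `T`-increasing sequence `a₀ <_T a₁ <_T ⋯ <_T a_s`
with even-indexed points in `U₁` and odd-indexed points in `U₂`. -/
def HasSnake {M : Type*} (T : M → M → Prop) (U₁ U₂ : Set M) (s : ℕ) : Prop :=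
  ∃ a : Fin (s + 1) → M,
    (∀ i j : Fin (s + 1), i < j → T (a i) (a j)) ∧
    (∀ i : Fin (s + 1), Even (i : ℕ) → a i ∈ U₁) ∧
    (∀ i : Fin (s + 1), Odd (i : ℕ) → a i ∈ U₂)

/-- The snake number `Snake_T(x, y)`: the greatest `s` such that for every `ε > 0`
the pair `(B_ε(x), B_ε(y))` contains a snake of length `s`; `∞` if no greatest exists. -/
noncomputable def snakeNum {M : Type*} [MetricSpace M] (T : M → M → Prop) (x y : M) : ℕ∞ :=
  ⨆ s ∈ {s : ℕ | ∀ ε : ℝ, 0 < ε → HasSnake T (ball x ε) (ball y ε) s}, (s : ℕ∞)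

/-- The snake number `Snake(M, T)` of the ordered metric space: the supremum of
`Snake_T(x, y)` over all pairs of distinct points. -/
noncomputable def snakeNumSpace {M : Type*} [MetricSpace M] (T : M → M → Prop) : ℕ∞ :=
  ⨆ (x : M) (y : M) (_ : x ≠ y), snakeNum T x y

/-- The Lebesgue covering dimension of `M` is at most `n`: every finite open cover
has a finite open refinement in which no point belongs to more than `n + 1` sets. -/
def CovDimLE (M : Type*) [TopologicalSpace M] (n : ℤ) : Prop :=
  ∀ 𝒰 : Set (Set M), 𝒰.Finite → (∀ U ∈ 𝒰, IsOpen U) → ⋃₀ 𝒰 = Set.univ →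
    ∃ 𝒱 : Set (Set M), 𝒱.Finite ∧ (∀ V ∈ 𝒱, IsOpen V) ∧ ⋃₀ 𝒱 = Set.univ ∧
      (∀ V ∈ 𝒱, ∃ U ∈ 𝒰, V ⊆ U) ∧
      ∀ x : M, ({V ∈ 𝒱 | x ∈ V}.ncard : ℤ) ≤ n + 1

/-- The antipodal point `A(x) = -x` of a point of the unit circle in `ℝ²`. -/
def antipode (x : Metric.sphere (0 : EuclideanSpace ℝ (Fin 2)) 1) :
    Metric.sphere (0 : EuclideanSpace ℝ (Fin 2)) 1 :=
  ⟨-(x : EuclideanSpace ℝ (Fin 2)), by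
    have hx := x.2
    simp only [mem_sphere_zero_iff_norm, norm_neg] at hx ⊢
    exact hx⟩

/-!
If no antipodal pair carried snakes of length two at every scale, then for every `x` small
balls around `x` and `-x` would be comparable as wholes: all of one `T`-below all of the
other, since otherwise three comparisons produce a snake. The points whose ball lies below the
antipodal ball and those whose ball lies above form two disjoint open sets covering the circle,
and the antipodal map exchanges them, so both are nonempty, contradicting connectedness.
-/

open Filter Topology

section Snake

variable {M : Type*} {T : M → M → Prop}

theorem HasSnake.mono {U₁ U₂ V₁ V₂ : Set M} {s : ℕ} (h : HasSnake T U₁ U₂ s)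
    (h₁ : U₁ ⊆ V₁) (h₂ : U₂ ⊆ V₂) : HasSnake T V₁ V₂ s :=
  let ⟨a, ha, he, ho⟩ := h
  ⟨a, ha, fun i hi => h₁ (he i hi), fun i hi => h₂ (ho i hi)⟩

theorem hasSnake_two_of_rel [IsTrans M T] {U₁ U₂ : Set M} {p q r : M}
    (hpq : T p q) (hqr : T q r) (hp : p ∈ U₁) (hq : q ∈ U₂) (hr : r ∈ U₁) :
    HasSnake T U₁ U₂ 2 := by
  refine ⟨![p, q, r], ?_, ?_, ?_⟩
  · intro i j hij
    fin_cases i <;> fin_cases j <;> simp_all [Fin.lt_def, _root_.trans hpq hqr]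
  all_goals intro i hi; fin_cases i <;> simp_all [Nat.even_iff, Nat.odd_iff]

theorem forall_rel_or_forall_rel_swap_of_not_hasSnake_two [IsStrictTotalOrder M T]
    {U V : Set M} (hUV : Disjoint U V) (hUV₂ : ¬HasSnake T U V 2) (hVU₂ : ¬HasSnake T V U 2) :
    (∀ a ∈ U, ∀ b ∈ V, T a b) ∨ (∀ a ∈ U, ∀ b ∈ V, T b a) := by
  have rel_of_not_rel_swap {a b : M} (hab : a ≠ b) (h : ¬T b a) : T a b :=
    (trichotomous_of T a b).elim id fun h' => h'.elim (absurd · hab) (absurd · h)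
  by_contra! ⟨⟨a₁, ha₁, b₁, hb₁, hab₁⟩, ⟨a₂, ha₂, b₂, hb₂, hba₂⟩⟩
  have hba₁ : T b₁ a₁ := rel_of_not_rel_swap (hUV.ne_of_mem ha₁ hb₁).symm hab₁
  have hab₂ : T a₂ b₂ := rel_of_not_rel_swap (hUV.ne_of_mem ha₂ hb₂) hba₂
  rcases trichotomous_of T a₁ b₂ with h | h | h
  · exact hVU₂ (hasSnake_two_of_rel hba₁ h hb₁ ha₁ hb₂)
  · exact hUV.ne_of_mem ha₁ hb₂ h
  · exact hUV₂ (hasSnake_two_of_rel hab₂ h ha₂ hb₂ ha₁)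

end Snake

section LocallyBelow

variable {M : Type*} [TopologicalSpace M] {T : M → M → Prop}

def LocallyBelow (T : M → M → Prop) (x y : M) : Prop :=
  ∀ᶠ p in 𝓝 (x, y), T p.1 p.2

theorem locallyBelow_of_forall_rel {x y : M} {s t : Set M} (hs : s ∈ 𝓝 x) (ht : t ∈ 𝓝 y)
    (h : ∀ a ∈ s, ∀ b ∈ t, T a b) : LocallyBelow T x y :=
  eventually_of_mem (prod_mem_nhds hs ht) fun _ hp => h _ hp.1 _ hp.2

theorem LocallyBelow.not_swap [Std.Asymm T] {x y : M} (h : LocallyBelow T x y) :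
    ¬LocallyBelow T y x := fun h' =>
  asymm h.self_of_nhds (h'.self_of_nhds : T y x)

theorem isOpen_setOf_locallyBelow {X : Type*} [TopologicalSpace X] {f g : X → M}
    (hf : Continuous f) (hg : Continuous g) : IsOpen {z | LocallyBelow T (f z) (g z)} :=
  (isOpen_setOfPred_eventually_nhds (p := fun p : M × M => T p.1 p.2)).preimage (hf.prodMk hg)

theorem exists_not_locallyBelow_of_involutive [PreconnectedSpace M] [Nonempty M] [Std.Asymm T]
    {σ : M → M} (hσ : Continuous σ) (hinv : Function.Involutive σ) :
    ∃ x, ¬LocallyBelow T x (σ x) ∧ ¬LocallyBelow T (σ x) x := by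
  by_contra! hcover
  set U := {x | LocallyBelow T x (σ x)}
  set V := {x | LocallyBelow T (σ x) x}
  have hσU : ∀ x ∈ U, σ x ∈ V := fun x hx =>
    show LocallyBelow T (σ (σ x)) (σ x) by rwa [hinv x]
  have hσV : ∀ x ∈ V, σ x ∈ U := fun x hx =>
    show LocallyBelow T (σ x) (σ (σ x)) by rwa [hinv x]
  obtain ⟨x₀⟩ := ‹Nonempty M›
  obtain ⟨hU, hV⟩ : U.Nonempty ∧ V.Nonempty := by
    by_cases hx₀ : x₀ ∈ U
    · exact ⟨⟨x₀, hx₀⟩, ⟨σ x₀, hσU x₀ hx₀⟩⟩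
    · have hx₀' : x₀ ∈ V := hcover x₀ hx₀
      exact ⟨⟨σ x₀, hσV x₀ hx₀'⟩, ⟨x₀, hx₀'⟩⟩
  obtain ⟨x, hxU, hxV⟩ := nonempty_inter (isOpen_setOf_locallyBelow continuous_id hσ)
    (isOpen_setOf_locallyBelow hσ continuous_id)
    (eq_univ_of_forall fun x => (em (x ∈ U)).imp_right (hcover x)) hU hV
  exact hxU.not_swap hxV

end LocallyBelow

section Metric

variable {M : Type*} [MetricSpace M] {T : M → M → Prop}

theorem locallyBelow_or_locallyBelow_of_not_hasSnake_two [IsStrictTotalOrder M T] {x y : M}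
    (hxy : x ≠ y) (hxy₂ : ∃ ε > 0, ¬HasSnake T (ball x ε) (ball y ε) 2)
    (hyx₂ : ∃ ε > 0, ¬HasSnake T (ball y ε) (ball x ε) 2) :
    LocallyBelow T x y ∨ LocallyBelow T y x := by
  obtain ⟨ε₁, hε₁, hxy₂⟩ := hxy₂
  obtain ⟨ε₂, hε₂, hyx₂⟩ := hyx₂
  set ε := min (min ε₁ ε₂) (dist x y / 2)
  have hε : 0 < ε := lt_min (lt_min hε₁ hε₂) (half_pos (dist_pos.mpr hxy))
  have hε₁' : ε ≤ ε₁ := (min_le_left _ _).trans (min_le_left _ _)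
  have hε₂' : ε ≤ ε₂ := (min_le_left _ _).trans (min_le_right _ _)
  have hdisj : Disjoint (ball x ε) (ball y ε) :=
    ball_disjoint_ball (by linarith [min_le_right (min ε₁ ε₂) (dist x y / 2)])
  rcases forall_rel_or_forall_rel_swap_of_not_hasSnake_two hdisj
    (fun h => hxy₂ (h.mono (ball_subset_ball hε₁') (ball_subset_ball hε₁')))
    (fun h => hyx₂ (h.mono (ball_subset_ball hε₂') (ball_subset_ball hε₂'))) with h | h
  · exact .inl (locallyBelow_of_forall_rel (ball_mem_nhds x hε) (ball_mem_nhds y hε) h)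
  · exact .inr (locallyBelow_of_forall_rel (ball_mem_nhds y hε) (ball_mem_nhds x hε)
      fun b hb a ha => h a ha b hb)

theorem exists_forall_hasSnake_two_of_involutive [PreconnectedSpace M] [Nonempty M]
    [IsStrictTotalOrder M T] {σ : M → M} (hσ : Continuous σ) (hinv : Function.Involutive σ)
    (hfix : ∀ x, σ x ≠ x) :
    ∃ x, ∀ ε > 0, HasSnake T (ball x ε) (ball (σ x) ε) 2 := by
  obtain ⟨x, hxσ, hσx⟩ := exists_not_locallyBelow_of_involutive (T := T) hσ hinv
  by_contra! h
  have hσ₂ : ∃ ε > 0, ¬HasSnake T (ball (σ x) ε) (ball x ε) 2 := by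
    simpa only [hinv x] using h (σ x)
  rcases locallyBelow_or_locallyBelow_of_not_hasSnake_two (hfix x).symm (h x) hσ₂ with h' | h'
  exacts [hxσ h', hσx h']

theorem le_snakeNum {x y : M} {s : ℕ} (h : ∀ ε > 0, HasSnake T (ball x ε) (ball y ε) s) :
    (s : ℕ∞) ≤ snakeNum T x y :=
  le_biSup (fun s : ℕ => (s : ℕ∞)) h

theorem snakeNum_le_snakeNumSpace {x y : M} (hxy : x ≠ y) :
    snakeNum T x y ≤ snakeNumSpace T :=
  le_iSup₂_of_le x y (le_iSup_of_le hxy le_rfl)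

end Metric

section Circle

local notation "S¹" => Metric.sphere (0 : EuclideanSpace ℝ (Fin 2)) 1

theorem continuous_antipode : Continuous antipode := continuous_neg

theorem antipode_involutive : Function.Involutive antipode := neg_neg

theorem antipode_ne_self (x : S¹) : antipode x ≠ x := (ne_neg_of_mem_unit_sphere ℝ x).symm

instance : PreconnectedSpace S¹ :=
  Subtype.preconnectedSpace <| isPreconnected_sphere
    (by rw [← Module.finrank_eq_rank, finrank_euclideanSpace_fin]; norm_num) 0 1

instance : Nonempty S¹ := (NormedSpace.sphere_nonempty.mpr zero_le_one).to_subtype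

end Circle

/-- **Proposition.** For every total order `T'` on the unit circle `S¹ ⊆ ℝ²`, there is a
pair of antipodal points `x, A(x)` with `Snake_{T'}(x, A(x)) ≥ 2`; in particular
`Snake(S¹, T') ≥ 2`. -/
theorem snake_circle_ge_two_of_anyOrder
    (T : Metric.sphere (0 : EuclideanSpace ℝ (Fin 2)) 1 →
         Metric.sphere (0 : EuclideanSpace ℝ (Fin 2)) 1 → Prop)
    (hT : IsStrictTotalOrder _ T) :
    (∃ x, 2 ≤ snakeNum T x (antipode x)) ∧ 2 ≤ snakeNumSpace T := by
  obtain ⟨x, hx⟩ := exists_forall_hasSnake_two_of_involutive (T := T)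
    continuous_antipode antipode_involutive antipode_ne_self
  have h₂ : (2 : ℕ∞) ≤ snakeNum T x (antipode x) := le_snakeNum hx
  exact ⟨⟨x, h₂⟩, h₂.trans (snakeNum_le_snakeNumSpace (antipode_ne_self x).symm)⟩
end

section
/- Let (M,T) be an ordered metric space with Snake(M,T) ≤ n. Suppose M is the disjoint union M = A ⊔ B of two sets such that x₁ <_T x₂ for all x₁ ∈ A and x₂ ∈ B. Then there exists a total order T' on the topological boundary ∂A of A such that Snake(∂A, T') ≤ n − 1, where ∂A is regarded as a metric space with the metric induced from M. -/
open Metric Set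

open Filter Topology

/-!
Approximate every boundary point `u` of `A` by a sequence `α u` in `A` and order `∂A` by
comparing these sequences along a fixed ultrafilter on `ℕ`. A `T'`-snake of length `s` in
`∂A` near `(x, y)` then yields, for a suitable index, a `T`-snake of length `s` in `A` near
`(x, y)`. Since `x` and `y` also lie in the closure of `B`, whose points all lie `T`-above `A`,
a point of `B` close to the appropriate endpoint extends it to a `T`-snake of length `s + 1`.
Hence `Snake_{T'}(x, y) + 1 ≤ Snake_T(x, y) ≤ n`.
-/

section SnakeNumber

variable {M : Type*} [MetricSpace M] {T : M → M → Prop}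

theorem le_snakeNumSpace {x y : M} (hxy : x ≠ y) {s : ℕ}
    (hs : ∀ ε : ℝ, 0 < ε → HasSnake T (ball x ε) (ball y ε) s) :
    (s : ℕ∞) ≤ snakeNumSpace T :=
  (le_iSup₂ (f := fun (t : ℕ) (_ : ∀ ε : ℝ, 0 < ε → HasSnake T (ball x ε) (ball y ε) t) =>
    (t : ℕ∞)) s hs).trans (le_iSup₂_of_le x y (le_iSup_of_le hxy le_rfl))

theorem snakeNumSpace_le {N : ℕ∞}
    (h : ∀ x y : M, x ≠ y → ∀ s : ℕ,
      (∀ ε : ℝ, 0 < ε → HasSnake T (ball x ε) (ball y ε) s) → (s : ℕ∞) ≤ N) :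
    snakeNumSpace T ≤ N :=
  iSup₂_le fun x y => iSup_le fun hxy => iSup₂_le fun s hs => h x y hxy s hs

end SnakeNumber

theorem HasSnake.snoc {M : Type*} {T : M → M → Prop} {U₁ U₂ A : Set M} {s : ℕ}
    (h : HasSnake T (U₁ ∩ A) (U₂ ∩ A) s) {b : M} (hAb : ∀ a ∈ A, T a b)
    (hb₁ : Even (s + 1) → b ∈ U₁) (hb₂ : Odd (s + 1) → b ∈ U₂) :
    HasSnake T U₁ U₂ (s + 1) := by
  obtain ⟨a, ha_lt, ha_even, ha_odd⟩ := h
  have ha_A (i : Fin (s + 1)) : a i ∈ A :=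
    (Nat.even_or_odd i).elim (fun hi => (ha_even i hi).2) (fun hi => (ha_odd i hi).2)
  refine ⟨Fin.snoc a b, fun i j hij => ?_, fun i hi => ?_, fun i hi => ?_⟩
  · induction j using Fin.lastCases with
    | last =>
      induction i using Fin.lastCases with
      | last => exact absurd hij (lt_irrefl _)
      | cast i => simpa using hAb _ (ha_A i)
    | cast j =>
      induction i using Fin.lastCases with
      | last => exact absurd hij (Fin.castSucc_lt_last j).not_gt
      | cast i => simpa using ha_lt i j (Fin.castSucc_lt_castSucc_iff.1 hij)
  · induction i using Fin.lastCases with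
    | last => simpa using hb₁ (by simpa using hi)
    | cast i => simpa using (ha_even i (by simpa using hi)).1
  · induction i using Fin.lastCases with
    | last => simpa using hb₂ (by simpa using hi)
    | cast i => simpa using (ha_odd i (by simpa using hi)).1

section EventuallyOrder

variable {X M ι : Type*} {T : M → M → Prop}

def eventuallyOrder (T : M → M → Prop) (U : Filter ι) (α : X → ι → M) (u v : X) : Prop :=
  ∀ᶠ m in U, T (α u m) (α v m)

theorem isStrictTotalOrder_eventuallyOrder [IsStrictTotalOrder M T] (U : Ultrafilter ι)
    {α : X → ι → M} (hα : ∀ u v, (∀ᶠ m in U, α u m = α v m) → u = v) :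
    IsStrictTotalOrder X (eventuallyOrder T U α) where
  irrefl u hu := by
    obtain ⟨m, hm⟩ := hu.exists
    exact irrefl _ hm
  trans _ _ _ huv hvw := (huv.and hvw).mono fun _ h => _root_.trans h.1 h.2
  trichotomous u v huv hvu := hα u v <| by
    filter_upwards [Ultrafilter.eventually_not.2 huv, Ultrafilter.eventually_not.2 hvu]
      with _ h₁ h₂
    exact Std.Trichotomous.trichotomous _ _ h₁ h₂

theorem HasSnake.of_eventuallyOrder {U : Filter ι} [U.NeBot] {α : X → ι → M}
    {V₁ V₂ : Set X} {W₁ W₂ : Set M} {s : ℕ} (h : HasSnake (eventuallyOrder T U α) V₁ V₂ s)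
    (hW₁ : ∀ u ∈ V₁, ∀ᶠ m in U, α u m ∈ W₁) (hW₂ : ∀ u ∈ V₂, ∀ᶠ m in U, α u m ∈ W₂) :
    HasSnake T W₁ W₂ s := by
  obtain ⟨a, ha_lt, ha₁, ha₂⟩ := h
  have h_lt : ∀ᶠ m in U, ∀ i j : Fin (s + 1), i < j → T (α (a i) m) (α (a j) m) :=
    eventually_all.2 fun i => eventually_all.2 fun j => eventually_imp_distrib_left.2 (ha_lt i j)
  have h₁ : ∀ᶠ m in U, ∀ i : Fin (s + 1), Even (i : ℕ) → α (a i) m ∈ W₁ :=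
    eventually_all.2 fun i => eventually_imp_distrib_left.2 fun hi => hW₁ _ (ha₁ i hi)
  have h₂ : ∀ᶠ m in U, ∀ i : Fin (s + 1), Odd (i : ℕ) → α (a i) m ∈ W₂ :=
    eventually_all.2 fun i => eventually_imp_distrib_left.2 fun hi => hW₂ _ (ha₂ i hi)
  obtain ⟨m, hm_lt, hm₁, hm₂⟩ := (h_lt.and (h₁.and h₂)).exists
  exact ⟨fun i => α (a i) m, hm_lt, hm₁, hm₂⟩

end EventuallyOrder

theorem exists_order_on_frontier_snake_le_general
    {M : Type*} [MetricSpace M]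
    (T : M → M → Prop) (hT : IsStrictTotalOrder M T)
    (n : ℕ) (h : snakeNumSpace T ≤ (n : ℕ∞))
    (A B : Set M) (hunion : A ∪ B = Set.univ)
    (hord : ∀ x₁ ∈ A, ∀ x₂ ∈ B, T x₁ x₂) :
    ∃ T' : frontier A → frontier A → Prop, IsStrictTotalOrder (frontier A) T' ∧
      snakeNumSpace T' ≤ (n : ℕ∞) - 1 := by
  have := hT
  choose α hαA hα using fun u : frontier A =>
    mem_closure_iff_seq_limit.1 (frontier_subset_closure u.2)
  set U := Ultrafilter.of (atTop : Filter ℕ)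
  have hαU (u : frontier A) : Tendsto (α u) U (𝓝 u) := (hα u).mono_left (Ultrafilter.of_le _)
  have hfrontier_B : frontier A ⊆ closure B := by
    rw [← frontier_compl]
    exact frontier_subset_closure.trans (closure_mono (compl_subset_iff_union.2 hunion))
  have hα_inj (u v : frontier A) (huv : ∀ᶠ m in U, α u m = α v m) : u = v :=
    Subtype.ext (tendsto_nhds_unique ((hαU u).congr' huv) (hαU v))
  refine ⟨eventuallyOrder T U α, isStrictTotalOrder_eventuallyOrder U hα_inj,
    snakeNumSpace_le fun x y hxy s hs => ?_⟩
  have hsnake (ε : ℝ) (hε : 0 < ε) : HasSnake T (ball x ε) (ball y ε) (s + 1) := by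
    have hball (z : frontier A) : ∀ u ∈ ball z ε, ∀ᶠ m in U, α u m ∈ ball (z : M) ε ∩ A :=
      fun u hu => ((hαU u).eventually (isOpen_ball.mem_nhds hu)).and (.of_forall (hαA u))
    have hB (z : frontier A) : (ball (z : M) ε ∩ B).Nonempty :=
      mem_closure_iff.1 (hfrontier_B z.2) _ isOpen_ball (mem_ball_self hε)
    have hA_snake := (hs ε hε).of_eventuallyOrder (hball x) (hball y)
    rcases Nat.even_or_odd (s + 1) with hs_even | hs_odd
    · obtain ⟨b, hb, hbB⟩ := hB x
      exact hA_snake.snoc (fun a ha => hord a ha b hbB) (fun _ => hb)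
        fun h => absurd hs_even (Nat.not_even_iff_odd.2 h)
    · obtain ⟨b, hb, hbB⟩ := hB y
      exact hA_snake.snoc (fun a ha => hord a ha b hbB)
        (fun h => absurd hs_odd (Nat.not_odd_iff_even.2 h)) fun _ => hb
  have hsucc : ((s + 1 : ℕ) : ℕ∞) ≤ n :=
    (le_snakeNumSpace (Subtype.coe_injective.ne hxy) hsnake).trans h
  exact ENat.le_sub_one_of_lt (by exact_mod_cast hsucc)

/-- **Lemma 1.** If `(M, T)` is an ordered metric space with `Snake(M,T) ≤ n`, and
`M = A ⊔ B` with every point of `A` being `T`-smaller than every point of `B`, then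
the boundary `∂A` (with the induced metric) admits a total order `T'` with
`Snake(∂A, T') ≤ n - 1`. -/
theorem exists_order_on_frontier_snake_le
    {M : Type*} [MetricSpace M]
    (T : M → M → Prop) (hT : IsStrictTotalOrder M T)
    (n : ℕ) (h : snakeNumSpace T ≤ (n : ℕ∞))
    (A B : Set M) (hdisj : Disjoint A B) (hunion : A ∪ B = Set.univ)
    (hord : ∀ x₁ ∈ A, ∀ x₂ ∈ B, T x₁ x₂) :
    ∃ T' : frontier A → frontier A → Prop, IsStrictTotalOrder (frontier A) T' ∧
      snakeNumSpace T' ≤ (n : ℕ∞) - 1 :=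
  exists_order_on_frontier_snake_le_general T hT n h A B hunion hord
end

section
/- Let M be a totally disconnected separable metric space, i.e. for every pair of distinct points x, y ∈ M there exists a clopen (open-and-closed) set U ⊆ M with x ∈ U and y ∈ M ∖ U. Then M admits a total order T for which Snake(M,T) ≤ 1. -/
/-!
Countably many clopen sets separate the points of `M`, so `M` embeds continuously and injectively
into Cantor space and hence into `ℝ`. Pull back the order of `ℝ` along such an embedding `f`. If
`f x < f y`, then some neighbourhood of `x` lies entirely below some neighbourhood of `y`, so no
snake `a₀ < a₁ < a₂` can alternate between small balls around `x` and `y`.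
-/

open Metric Set

open Filter Topology Function

namespace HasSnake

variable {M : Type*} {T : M → M → Prop} {U₁ U₂ : Set M} {s : ℕ}

theorem of_le (h : HasSnake T U₁ U₂ s) {t : ℕ} (hts : t ≤ s) : HasSnake T U₁ U₂ t := by
  obtain ⟨a, hlt, heven, hodd⟩ := h
  exact ⟨a ∘ Fin.castLE (by omega), fun i j hij => hlt _ _ hij, fun i => heven (Fin.castLE _ i),
    fun i => hodd (Fin.castLE _ i)⟩

theorem mono_s11 (h : HasSnake T U₁ U₂ s) {V₁ V₂ : Set M} (h₁ : U₁ ⊆ V₁) (h₂ : U₂ ⊆ V₂) :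
    HasSnake T V₁ V₂ s := by
  obtain ⟨a, hlt, heven, hodd⟩ := h
  exact ⟨a, hlt, fun i hi => h₁ (heven i hi), fun i hi => h₂ (hodd i hi)⟩

theorem not_two [Std.Asymm T]
    (hsep : (∀ a ∈ U₁, ∀ b ∈ U₂, T a b) ∨ ∀ a ∈ U₁, ∀ b ∈ U₂, T b a) :
    ¬HasSnake T U₁ U₂ 2 := by
  rintro ⟨a, hlt, heven, hodd⟩
  have h₀ := heven 0 (by decide)
  have h₁ := hodd 1 (by decide)
  have h₂ := heven 2 (by decide)
  rcases hsep with hsep | hsep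
  · exact asymm (hlt 1 2 (by decide)) (hsep _ h₂ _ h₁)
  · exact asymm (hlt 0 1 (by decide)) (hsep _ h₀ _ h₁)

end HasSnake

section SnakeNumber

variable {M : Type*} [MetricSpace M] {T : M → M → Prop}

theorem snakeNum_le_one_of_mem_nhds [Std.Asymm T] {x y : M} {U V : Set M} (hU : U ∈ 𝓝 x)
    (hV : V ∈ 𝓝 y) (hsep : (∀ a ∈ U, ∀ b ∈ V, T a b) ∨ ∀ a ∈ U, ∀ b ∈ V, T b a) :
    snakeNum T x y ≤ 1 := by
  refine iSup₂_le fun s hs => ?_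
  obtain ⟨εx, hεx, hballx⟩ := Metric.mem_nhds_iff.1 hU
  obtain ⟨εy, hεy, hbally⟩ := Metric.mem_nhds_iff.1 hV
  by_contra! hs2
  refine HasSnake.not_two hsep <| ((hs _ (lt_min hεx hεy)).of_le (by exact_mod_cast hs2)).mono_s11 ?_ ?_
  · exact (ball_subset_ball (min_le_left _ _)).trans hballx
  · exact (ball_subset_ball (min_le_right _ _)).trans hbally

theorem snakeNumSpace_invImage_lt_le_one {α : Type*} [LinearOrder α] [TopologicalSpace α]
    [OrderTopology α] {f : M → α} (hf : Continuous f) (hinj : Injective f) :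
    snakeNumSpace (InvImage (· < ·) f) ≤ 1 := by
  refine iSup_le fun x => iSup_le fun y => iSup_le fun hxy => ?_
  have separated {p q : M} (hpq : f p < f q) :
      ∃ U ∈ 𝓝 p, ∃ V ∈ 𝓝 q, ∀ a ∈ U, ∀ b ∈ V, f a < f b := by
    obtain ⟨u, v, hu, hv, hpu, hqv, huv⟩ := order_separated hpq
    exact ⟨_, hf.continuousAt.preimage_mem_nhds (hu.mem_nhds hpu), _,
      hf.continuousAt.preimage_mem_nhds (hv.mem_nhds hqv), fun a ha b hb => huv _ ha _ hb⟩
  rcases (hinj.ne hxy).lt_or_gt with hlt | hgt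
  · obtain ⟨U, hU, V, hV, hUV⟩ := separated hlt
    exact snakeNum_le_one_of_mem_nhds hU hV (.inl hUV)
  · obtain ⟨V, hV, U, hU, hVU⟩ := separated hgt
    exact snakeNum_le_one_of_mem_nhds hU hV (.inr fun a ha b hb => hVU b hb a ha)

end SnakeNumber

section CantorEmbedding

variable (X : Type*) [TopologicalSpace X]

-- `X × X` is Lindelöf and the sets `U ×ˢ Uᶜ`, `U` clopen, cover the complement of the diagonal.
instance [SecondCountableTopology X] [TotallySeparatedSpace X] :
    HasCountableSeparatingOn X IsClopen univ := by
  obtain ⟨S, hSc, hS⟩ := TopologicalSpace.isOpen_iUnion_countable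
    (fun U : {U : Set X // IsClopen U} => (U : Set X) ×ˢ (U : Set X)ᶜ)
    fun U => U.2.isOpen.prod U.2.compl.isOpen
  refine ⟨⟨(↑) '' S, hSc.image _, forall_mem_image.2 fun U _ => U.2, fun x _ y _ hxy => ?_⟩⟩
  by_contra hne
  obtain ⟨U, hU, hxU, hyU⟩ := exists_isClopen_of_totally_separated hne
  have hmem : (x, y) ∈ ⋃ U ∈ S, (U : Set X) ×ˢ (U : Set X)ᶜ :=
    hS ▸ mem_iUnion.2 ⟨⟨U, hU⟩, hxU, hyU⟩
  simp only [mem_iUnion, mem_prod, mem_compl_iff] at hmem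
  obtain ⟨V, hV, hxV, hyV⟩ := hmem
  exact hyV ((hxy V (mem_image_of_mem _ hV)).1 hxV)

theorem exists_continuous_injective_natBool [HasCountableSeparatingOn X IsClopen univ] :
    ∃ f : X → ℕ → Bool, Continuous f ∧ Injective f := by
  obtain ⟨u, hu, hsep⟩ := exists_seq_separating X isClopen_empty univ
  refine ⟨fun x n => (u n).boolIndicator x,
    continuous_pi fun n => (continuous_boolIndicator_iff_isClopen _).2 (hu n),
    fun x y hxy => hsep x trivial y trivial fun n => ?_⟩
  rw [mem_iff_boolIndicator, mem_iff_boolIndicator]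
  exact iff_of_eq (congrArg (· = true) (congrFun hxy n))

theorem exists_continuous_injective_real [HasCountableSeparatingOn X IsClopen univ] :
    ∃ f : X → ℝ, Continuous f ∧ Injective f := by
  obtain ⟨g, hg, hinj⟩ := exists_continuous_injective_natBool X
  exact ⟨(↑) ∘ cantorSetHomeomorphNatToBool.symm ∘ g,
    continuous_subtype_val.comp (cantorSetHomeomorphNatToBool.symm.continuous.comp hg),
    Subtype.val_injective.comp (cantorSetHomeomorphNatToBool.symm.injective.comp hinj)⟩

end CantorEmbedding

/-- **Proposition.** A totally disconnected separable metric space admits a total order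
`T` with `Snake(M,T) ≤ 1`. -/
theorem exists_order_snake_le_one_of_totallyDisconnected
    {M : Type*} [MetricSpace M] [TopologicalSpace.SeparableSpace M]
    (htd : ∀ x y : M, x ≠ y → ∃ U : Set M, IsClopen U ∧ x ∈ U ∧ y ∉ U) :
    ∃ T : M → M → Prop, IsStrictTotalOrder M T ∧ snakeNumSpace T ≤ 1 := by
  have : SecondCountableTopology M := UniformSpace.secondCountable_of_separable M
  have : TotallySeparatedSpace M := totallySeparatedSpace_iff_exists_isClopen.2 htd
  obtain ⟨f, hf, hinj⟩ := exists_continuous_injective_real M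
  exact ⟨InvImage (· < ·) f, { toTrichotomous := InvImage.trichotomous hinj },
    snakeNumSpace_invImage_lt_le_one hf hinj⟩
end
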